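/- Quasiconvexity of subgraph regions: if f : [a,b] → ℝ is L-Lipschitz and positive, then the region Ω = {(x,y) : a ≤ x ≤ b, 0 ≤ y ≤ f(x)} bounded by the graph of f and the x-axis is (L+1)-quasiconvex: any two points of Ω are joined by a path in Ω of length at most (L+1) times their Euclidean distance. -/

import Mathlib

open Set

/-- The closed region under the graph of `f` over `[a,b]`. -/
def subgraph (a b : ℝ) (f : ℝ → ℝ) : Set (EuclideanSpace ℝ (Fin 2)) :=
  {p | p 0 ∈ Set.Icc a b ∧ p 1 ∈ Set.Icc 0 (f (p 0))}

/-!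
Join `p` and `q` by the straight segment and push it down into the region with the vertical
clamp `(x, y) ↦ (x, min y (f x))`, which fixes the region pointwise. Over `[a,b]` the clamp moves
the second coordinate by at most `|Δy| + L |Δx|`, and
`|Δx|² + (|Δy| + L |Δx|)² ≤ (L + 1)² (|Δx|² + |Δy|²)`, so the clamp is `(L + 1)`-Lipschitz there.
The clamped segment is thus an `(L + 1) |p - q|`-Lipschitz path on `[0,1]`, whose length is at
most that constant; positivity of `f` keeps it above the `x`-axis.
-/

open AffineMap NNReal

def clampToGraph (f : ℝ → ℝ) (p : EuclideanSpace ℝ (Fin 2)) : EuclideanSpace ℝ (Fin 2) :=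
  !₂[p 0, min (p 1) (f (p 0))]

theorem LipschitzOnWith.eVariationOn_Icc_le {E : Type*} [PseudoEMetricSpace E] {γ : ℝ → E}
    {K : ℝ≥0} {a b : ℝ} (h : LipschitzOnWith K γ (Icc a b)) :
    eVariationOn γ (Icc a b) ≤ K * ENNReal.ofReal (b - a) := by
  simpa [eVariationOn_id_Icc] using h.comp_eVariationOn_le (mapsTo_id _)

lemma sq_add_add_mul_sq_le (L A D : ℝ) (hL : 0 ≤ L) :
    A ^ 2 + (D + L * A) ^ 2 ≤ (L + 1) ^ 2 * (A ^ 2 + D ^ 2) := by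
  nlinarith [mul_nonneg hL (sub_nonneg.2 (two_mul_le_add_sq A D)),
    mul_nonneg (mul_nonneg hL hL) (sq_nonneg D)]

lemma LipschitzOnWith.abs_min_sub_min_le {f : ℝ → ℝ} {s : Set ℝ} {K : ℝ≥0}
    (hf : LipschitzOnWith K f s) {x y x' y' : ℝ} (hx : x ∈ s) (hx' : x' ∈ s) :
    |min y (f x) - min y' (f x')| ≤ |y - y'| + K * |x - x'| := by
  refine (abs_min_sub_min_le_max _ _ _ _).trans (max_le ?_ ?_)
  · have := mul_nonneg K.coe_nonneg (abs_nonneg (x - x'))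
    linarith
  · have := hf.dist_le_mul x hx x' hx'
    rw [Real.dist_eq, Real.dist_eq] at this
    linarith [abs_nonneg (y - y')]

theorem LipschitzOnWith.clampToGraph {f : ℝ → ℝ} {s : Set ℝ} {K : ℝ≥0}
    (hf : LipschitzOnWith K f s) :
    LipschitzOnWith (K + 1) (clampToGraph f) {p | p 0 ∈ s} := by
  refine LipschitzOnWith.of_dist_le_mul fun u hu v hv => ?_
  have hmin := hf.abs_min_sub_min_le (y := u 1) (y' := v 1) hu hv
  rw [EuclideanSpace.dist_eq, EuclideanSpace.dist_eq, Fin.sum_univ_two, Fin.sum_univ_two]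
  simp only [Real.dist_eq, sq_abs, NNReal.coe_add, NNReal.coe_one]
  change √((u 0 - v 0) ^ 2 + (min (u 1) (f (u 0)) - min (v 1) (f (v 0))) ^ 2) ≤ _
  rw [← Real.sqrt_sq (by positivity : (0 : ℝ) ≤ K + 1), ← Real.sqrt_mul (sq_nonneg _)]
  refine Real.sqrt_le_sqrt ?_
  calc (u 0 - v 0) ^ 2 + (min (u 1) (f (u 0)) - min (v 1) (f (v 0))) ^ 2
      ≤ |u 0 - v 0| ^ 2 + (|u 1 - v 1| + K * |u 0 - v 0|) ^ 2 := by
        rw [sq_abs, ← sq_abs (min _ _ - _)]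
        gcongr
    _ ≤ (K + 1) ^ 2 * (|u 0 - v 0| ^ 2 + |u 1 - v 1| ^ 2) :=
        sq_add_add_mul_sq_le _ _ _ K.coe_nonneg
    _ = (K + 1) ^ 2 * ((u 0 - v 0) ^ 2 + (u 1 - v 1) ^ 2) := by rw [sq_abs, sq_abs]

lemma clampToGraph_eq_self {a b : ℝ} {f : ℝ → ℝ} {p : EuclideanSpace ℝ (Fin 2)}
    (hp : p ∈ subgraph a b f) : clampToGraph f p = p := by
  ext i
  fin_cases i
  · rfl
  · exact min_eq_left hp.2.2

lemma clampToGraph_mem_subgraph {a b : ℝ} {f : ℝ → ℝ} {p : EuclideanSpace ℝ (Fin 2)}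
    (hp₀ : p 0 ∈ Icc a b) (hp₁ : 0 ≤ p 1) (hf : 0 ≤ f (p 0)) :
    clampToGraph f p ∈ subgraph a b f :=
  ⟨hp₀, le_min hp₁ hf, min_le_right _ _⟩

lemma lineMap_mem_strip {a b : ℝ} {f : ℝ → ℝ} {p q : EuclideanSpace ℝ (Fin 2)}
    (hp : p ∈ subgraph a b f) (hq : q ∈ subgraph a b f) {t : ℝ} (ht : t ∈ Icc (0 : ℝ) 1) :
    lineMap p q t 0 ∈ Icc a b ∧ 0 ≤ lineMap p q t 1 := by
  have hcoord : ∀ i, lineMap p q t i = lineMap (p i) (q i) t := fun i => by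
    simp [lineMap_apply_module]
  rw [hcoord, hcoord]
  exact ⟨(convex_Icc a b).lineMap_mem hp.1 hq.1 ht,
    (convex_Ici (0 : ℝ)).lineMap_mem hp.2.1 hq.2.1 ht⟩

theorem stmt12_general (L a b : ℝ) (hL : 0 ≤ L) (f : ℝ → ℝ)
    (hfpos : ∀ x ∈ Set.Icc a b, 0 < f x)
    (hflip : ∀ x ∈ Set.Icc a b, ∀ y ∈ Set.Icc a b, |f x - f y| ≤ L * |x - y|) :
    ∀ p ∈ subgraph a b f, ∀ q ∈ subgraph a b f,
      ∃ γ : ℝ → EuclideanSpace ℝ (Fin 2), γ 0 = p ∧ γ 1 = q ∧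
        ContinuousOn γ (Set.Icc 0 1) ∧ Set.MapsTo γ (Set.Icc 0 1) (subgraph a b f) ∧
        eVariationOn γ (Set.Icc 0 1) ≤ ENNReal.ofReal ((L + 1) * dist p q) := by
  intro p hp q hq
  have hfL : LipschitzOnWith L.toNNReal f (Icc a b) :=
    LipschitzOnWith.of_dist_le_mul fun x hx y hy => by
      simpa [Real.dist_eq, Real.coe_toNNReal _ hL] using hflip x hx y hy
  have hγ : LipschitzOnWith ((L.toNNReal + 1) * nndist p q) (clampToGraph f ∘ lineMap p q)
      (Icc (0 : ℝ) 1) :=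
    hfL.clampToGraph.comp (lipschitzWith_lineMap p q).lipschitzOnWith
      fun t ht => (lineMap_mem_strip hp hq ht).1
  refine ⟨clampToGraph f ∘ lineMap p q, by simp [clampToGraph_eq_self hp],
    by simp [clampToGraph_eq_self hq], hγ.continuousOn, fun t ht => ?_, ?_⟩
  · obtain ⟨hx, hy⟩ := lineMap_mem_strip hp hq ht
    exact clampToGraph_mem_subgraph hx hy (hfpos _ hx).le
  · calc eVariationOn _ (Icc 0 1) ≤ _ := hγ.eVariationOn_Icc_le
      _ = ENNReal.ofReal ((L + 1) * dist p q) := by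
        rw [sub_zero, ENNReal.ofReal_one, mul_one, ← ENNReal.ofReal_coe_nnreal]
        push_cast [Real.coe_toNNReal _ hL, coe_nndist]
        rfl

/-- If `f : [a,b] → ℝ` is positive and `L`-Lipschitz, the region between its graph and the
`x`-axis is `(L+1)`-quasiconvex: any two of its points are joined by a path inside it of
length at most `(L+1)` times their distance. -/
theorem stmt12 (L a b : ℝ) (hL : 0 ≤ L) (hab : a ≤ b) (f : ℝ → ℝ)
    (hfpos : ∀ x ∈ Set.Icc a b, 0 < f x)
    (hflip : ∀ x ∈ Set.Icc a b, ∀ y ∈ Set.Icc a b, |f x - f y| ≤ L * |x - y|) :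
    ∀ p ∈ subgraph a b f, ∀ q ∈ subgraph a b f,
      ∃ γ : ℝ → EuclideanSpace ℝ (Fin 2), γ 0 = p ∧ γ 1 = q ∧
        ContinuousOn γ (Set.Icc 0 1) ∧ Set.MapsTo γ (Set.Icc 0 1) (subgraph a b f) ∧
        eVariationOn γ (Set.Icc 0 1) ≤ ENNReal.ofReal ((L + 1) * dist p q) :=
  stmt12_general L a b hL f hfpos hflip
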